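/- Let (S, 0) be a pointed metrizable topological space, and let f₁, …, f_k be non-identity elements of the group Homeo̰₊^{(S,0)}(ℝ, 0). Then there exist ε₁, …, ε_k ∈ {−1, 1} such that the subsemigroup of Homeo̰₊^{(S,0)}(ℝ, 0) generated by f₁^{ε₁}, …, f_k^{ε_k} does not contain the identity germ. -/
import Mathlib


open Filter Topology Set

variable (S : Type*) [TopologicalSpace S] (s₀ : S)

/-- Data representing a local homeomorphism `F` of an open neighborhood of
`(0, s₀)` in `ℝ × S` of the form `F (x, s) = (h_s x, s)`, where each `h_s` is a
local orientation-preserving (strictly increasing) homeomorphism of `ℝ`, with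
`F (0, s₀) = (0, s₀)`, together with a local inverse `G`. -/
structure ParamLocalHomeo where
  F : ℝ × S → ℝ × S
  G : ℝ × S → ℝ × S
  U : Set (ℝ × S)
  V : Set (ℝ × S)
  isOpen_U : IsOpen U
  isOpen_V : IsOpen V
  mem_U : ((0 : ℝ), s₀) ∈ U
  mem_V : ((0 : ℝ), s₀) ∈ V
  contF : ContinuousOn F U
  contG : ContinuousOn G V
  mapsF : Set.MapsTo F U V
  mapsG : Set.MapsTo G V U
  leftInv : ∀ p ∈ U, G (F p) = p
  rightInv : ∀ p ∈ V, F (G p) = p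
  snd_eq : ∀ p ∈ U, (F p).2 = p.2
  mono : ∀ p ∈ U, ∀ q ∈ U, p.2 = q.2 → p.1 < q.1 → (F p).1 < (F q).1
  fixes : F ((0 : ℝ), s₀) = ((0 : ℝ), s₀)

namespace ParamLocalHomeo

variable {S s₀}

instance setoid : Setoid (ParamLocalHomeo S s₀) where
  r d e := d.F =ᶠ[nhds ((0 : ℝ), s₀)] e.F
  iseqv := ⟨fun _ => Filter.EventuallyEq.refl _ _,
    fun h => h.symm, fun h h' => h.trans h'⟩

lemma G_fixes (d : ParamLocalHomeo S s₀) : d.G ((0 : ℝ), s₀) = ((0 : ℝ), s₀) := by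
  have h := d.leftInv _ d.mem_U
  rw [d.fixes] at h
  exact h

lemma G_snd_eq (d : ParamLocalHomeo S s₀) : ∀ p ∈ d.V, (d.G p).2 = p.2 := by
  intro p hp
  have h := d.snd_eq (d.G p) (d.mapsG hp)
  rw [d.rightInv p hp] at h
  exact h.symm

def one : ParamLocalHomeo S s₀ where
  F := id
  G := id
  U := Set.univ
  V := Set.univ
  isOpen_U := isOpen_univ
  isOpen_V := isOpen_univ
  mem_U := trivial
  mem_V := trivial
  contF := continuousOn_id
  contG := continuousOn_id
  mapsF := fun _ _ => trivial
  mapsG := fun _ _ => trivial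
  leftInv := fun _ _ => rfl
  rightInv := fun _ _ => rfl
  snd_eq := fun _ _ => rfl
  mono := fun _ _ _ _ _ h => h
  fixes := rfl

def comp (d e : ParamLocalHomeo S s₀) : ParamLocalHomeo S s₀ where
  F := d.F ∘ e.F
  G := e.G ∘ d.G
  U := e.U ∩ e.F ⁻¹' d.U
  V := d.V ∩ d.G ⁻¹' e.V
  isOpen_U := e.contF.isOpen_inter_preimage e.isOpen_U d.isOpen_U
  isOpen_V := d.contG.isOpen_inter_preimage d.isOpen_V e.isOpen_V
  mem_U := ⟨e.mem_U, by simp only [Set.mem_preimage, e.fixes]; exact d.mem_U⟩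
  mem_V := ⟨d.mem_V, by simp only [Set.mem_preimage, d.G_fixes]; exact e.mem_V⟩
  contF := d.contF.comp (e.contF.mono Set.inter_subset_left) (fun x hx => hx.2)
  contG := e.contG.comp (d.contG.mono Set.inter_subset_left) (fun x hx => hx.2)
  mapsF := by
    rintro p ⟨hp1, hp2⟩
    refine ⟨d.mapsF hp2, ?_⟩
    simp only [Set.mem_preimage, Function.comp_apply]
    rw [d.leftInv _ hp2]
    exact e.mapsF hp1
  mapsG := by
    rintro q ⟨hq1, hq2⟩
    refine ⟨e.mapsG hq2, ?_⟩
    simp only [Set.mem_preimage, Function.comp_apply]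
    rw [e.rightInv _ hq2]
    exact d.mapsG hq1
  leftInv := by
    rintro p ⟨hp1, hp2⟩
    simp only [Function.comp_apply]
    rw [d.leftInv _ hp2, e.leftInv _ hp1]
  rightInv := by
    rintro q ⟨hq1, hq2⟩
    simp only [Function.comp_apply]
    rw [e.rightInv _ hq2, d.rightInv _ hq1]
  snd_eq := by
    rintro p ⟨hp1, hp2⟩
    simp only [Function.comp_apply]
    rw [d.snd_eq _ hp2, e.snd_eq _ hp1]
  mono := by
    rintro p ⟨hp1, hp2⟩ q ⟨hq1, hq2⟩ hpq hlt
    refine d.mono _ hp2 _ hq2 ?_ (e.mono _ hp1 _ hq1 hpq hlt)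
    rw [e.snd_eq _ hp1, e.snd_eq _ hq1, hpq]
  fixes := by simp only [Function.comp_apply, e.fixes, d.fixes]

def inv (d : ParamLocalHomeo S s₀) : ParamLocalHomeo S s₀ where
  F := d.G
  G := d.F
  U := d.V
  V := d.U
  isOpen_U := d.isOpen_V
  isOpen_V := d.isOpen_U
  mem_U := d.mem_V
  mem_V := d.mem_U
  contF := d.contG
  contG := d.contF
  mapsF := d.mapsG
  mapsG := d.mapsF
  leftInv := d.rightInv
  rightInv := d.leftInv
  snd_eq := d.G_snd_eq
  mono := by
    intro p hp q hq hpq hlt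
    have hGp := d.mapsG hp
    have hGq := d.mapsG hq
    have hsnd : (d.G p).2 = (d.G q).2 := by
      rw [d.G_snd_eq p hp, d.G_snd_eq q hq, hpq]
    rcases lt_trichotomy (d.G p).1 (d.G q).1 with h | h | h
    · exact h
    · exfalso
      have : d.G p = d.G q := Prod.ext h hsnd
      have : p = q := by rw [← d.rightInv p hp, ← d.rightInv q hq, this]
      exact absurd (congrArg Prod.fst this) (ne_of_lt hlt)
    · exfalso
      have := d.mono _ hGq _ hGp hsnd.symm h
      rw [d.rightInv p hp, d.rightInv q hq] at this
      exact absurd hlt (not_lt.mpr this.le)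
  fixes := d.G_fixes

lemma comp_sound {d₁ e₁ d₂ e₂ : ParamLocalHomeo S s₀} (h₁ : d₁ ≈ e₁) (h₂ : d₂ ≈ e₂) :
    comp d₁ d₂ ≈ comp e₁ e₂ := by
  have hc : ContinuousAt d₂.F ((0 : ℝ), s₀) :=
    d₂.contF.continuousAt (d₂.isOpen_U.mem_nhds d₂.mem_U)
  have ht : Tendsto d₂.F (nhds ((0 : ℝ), s₀)) (nhds ((0 : ℝ), s₀)) := by
    have := hc.tendsto
    rwa [d₂.fixes] at this
  exact (h₁.comp_tendsto ht).trans (h₂.fun_comp e₁.F)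

lemma inv_sound {d e : ParamLocalHomeo S s₀} (h : d ≈ e) : inv d ≈ inv e := by
  obtain ⟨s, hs, hseq⟩ := Filter.eventuallyEq_iff_exists_mem.mp h
  obtain ⟨W, hWs, hWopen, hW0⟩ := mem_nhds_iff.mp hs
  set A : Set (ℝ × S) := d.U ∩ e.U ∩ W with hA
  have hAopen : IsOpen A := (d.isOpen_U.inter e.isOpen_U).inter hWopen
  have hA0 : ((0 : ℝ), s₀) ∈ A := ⟨⟨d.mem_U, e.mem_U⟩, hW0⟩
  have hBopen : IsOpen (d.V ∩ d.G ⁻¹' A) := d.contG.isOpen_inter_preimage d.isOpen_V hAopen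
  have hB0 : ((0 : ℝ), s₀) ∈ d.V ∩ d.G ⁻¹' A :=
    ⟨d.mem_V, by simp only [Set.mem_preimage, d.G_fixes]; exact hA0⟩
  apply Filter.eventuallyEq_of_mem (hBopen.mem_nhds hB0)
  rintro q ⟨hq1, hq2⟩
  simp only [Set.mem_preimage] at hq2
  obtain ⟨⟨hxU, hxU'⟩, hxW⟩ := hq2
  show d.G q = e.G q
  have h1 : d.F (d.G q) = q := d.rightInv q hq1
  have h2 : e.F (d.G q) = q := by rw [← hseq (hWs hxW)]; exact h1
  calc d.G q = e.G (e.F (d.G q)) := (e.leftInv _ hxU').symm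
    _ = e.G q := by rw [h2]

end ParamLocalHomeo

/-- The group `Homeo̰₊^{(S,s₀)}(ℝ, 0)` of germs at `(0, s₀)` of local
homeomorphisms of `ℝ × S` of the form `(x, s) ↦ (h_s x, s)`, fixing `(0, s₀)`,
under composition of germs. -/
def ParamGermHomeoPlus : Type _ := Quotient (ParamLocalHomeo.setoid (S := S) (s₀ := s₀))

namespace ParamGermHomeoPlus

instance : Group (ParamGermHomeoPlus S s₀) where
  mul := Quotient.map₂ ParamLocalHomeo.comp
    (fun _ _ h₁ _ _ h₂ => ParamLocalHomeo.comp_sound h₁ h₂)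
  one := ⟦ParamLocalHomeo.one⟧
  inv := Quotient.map ParamLocalHomeo.inv (fun _ _ h => ParamLocalHomeo.inv_sound h)
  mul_assoc a b c := by
    induction a using Quotient.ind
    induction b using Quotient.ind
    induction c using Quotient.ind
    exact Quotient.sound (Filter.EventuallyEq.refl _ _)
  one_mul a := by
    induction a using Quotient.ind
    exact Quotient.sound (Filter.EventuallyEq.refl _ _)
  mul_one a := by
    induction a using Quotient.ind
    exact Quotient.sound (Filter.EventuallyEq.refl _ _)
  inv_mul_cancel a := by
    induction a using Quotient.ind
    rename_i d
    apply Quotient.sound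
    apply Filter.eventuallyEq_of_mem (d.isOpen_U.mem_nhds d.mem_U)
    intro p hp
    exact d.leftInv p hp

end ParamGermHomeoPlus
open Filter Topology Set

namespace GermSignAux
open ParamLocalHomeo
variable {S : Type*} [TopologicalSpace S] {s₀ : S}

private def gmk (x : ParamLocalHomeo S s₀) : ParamGermHomeoPlus S s₀ :=
  Quotient.mk (ParamLocalHomeo.setoid) x

private lemma gmk_mul (x y : ParamLocalHomeo S s₀) :
    gmk x * gmk y = gmk (x.comp y) := rfl

private lemma gmk_inv (x : ParamLocalHomeo S s₀) :
    (gmk x)⁻¹ = gmk x.inv := rfl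

private lemma gmk_out (g : ParamGermHomeoPlus S s₀) : gmk (Quotient.out g) = g :=
  Quotient.out_eq g

private lemma out_equiv {g : ParamGermHomeoPlus S s₀} {e : ParamLocalHomeo S s₀}
    (he : gmk e = g) :
    (Quotient.out g).F =ᶠ[nhds ((0:ℝ), s₀)] e.F := by
  have h : gmk (Quotient.out g) = gmk e := by rw [he]; exact gmk_out g
  exact Quotient.exact h

private lemma G_up (d : ParamLocalHomeo S s₀) {a : ℝ × S} (haU : a ∈ d.U)
    (haV : a ∈ d.V) (h : (d.F a).1 < a.1) : a.1 < (d.G a).1 := by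
  have hqU : d.G a ∈ d.U := d.mapsG haV
  have hq2 : (d.G a).2 = a.2 := d.G_snd_eq a haV
  have hFq : d.F (d.G a) = a := d.rightInv a haV
  by_contra hc
  push_neg at hc
  rcases eq_or_lt_of_le hc with hc | hc
  · have h2 : d.G a = a := Prod.ext hc hq2
    rw [h2] at hFq
    rw [hFq] at h
    exact lt_irrefl _ h
  · have h3 := d.mono (d.G a) hqU a haU hq2 hc
    rw [hFq] at h3
    exact lt_irrefl _ (h3.trans h)

private lemma G_fix (d : ParamLocalHomeo S s₀) {a : ℝ × S} (haU : a ∈ d.U)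
    (h : d.F a = a) : d.G a = a := by
  have h2 := d.leftInv a haU
  rwa [h] at h2

variable {q : ℕ → ℝ × S}

private lemma ev_facts (hq : Tendsto q atTop (nhds ((0:ℝ), s₀)))
    (d : ParamLocalHomeo S s₀) :
    ∀ᶠ n in atTop, q n ∈ d.U ∧ q n ∈ d.V ∧ (d.F (q n)).2 = (q n).2 := by
  filter_upwards [hq.eventually_mem (d.isOpen_U.mem_nhds d.mem_U),
    hq.eventually_mem (d.isOpen_V.mem_nhds d.mem_V)] with n h1 h2
  exact ⟨h1, h2, d.snd_eq _ h1⟩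

private lemma tendsto_F (hq : Tendsto q atTop (nhds ((0:ℝ), s₀)))
    (d : ParamLocalHomeo S s₀) :
    Tendsto (fun n => d.F (q n)) atTop (nhds ((0:ℝ), s₀)) := by
  have hc : ContinuousAt d.F ((0:ℝ), s₀) :=
    d.contF.continuousAt (d.isOpen_U.mem_nhds d.mem_U)
  have h2 := hc.tendsto.comp hq
  rwa [d.fixes] at h2

private lemma ev_comp (hq : Tendsto q atTop (nhds ((0:ℝ), s₀)))
    (a b : ParamGermHomeoPlus S s₀) :
    ∀ᶠ n in atTop, (Quotient.out (a * b)).F (q n) =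
      (Quotient.out a).F ((Quotient.out b).F (q n)) := by
  have he : gmk ((Quotient.out a).comp (Quotient.out b)) = a * b := by
    rw [← gmk_mul, gmk_out, gmk_out]
  filter_upwards [hq.eventually (out_equiv he)] with n h
  exact h

private lemma ev_inv (hq : Tendsto q atTop (nhds ((0:ℝ), s₀)))
    (a : ParamGermHomeoPlus S s₀) :
    ∀ᶠ n in atTop, (Quotient.out (a⁻¹ : ParamGermHomeoPlus S s₀)).F (q n) = (Quotient.out a).G (q n) := by
  have he : gmk (Quotient.out a).inv = a⁻¹ := by rw [← gmk_inv, gmk_out]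
  filter_upwards [hq.eventually (out_equiv he)] with n h
  exact h

private lemma ev_one (hq : Tendsto q atTop (nhds ((0:ℝ), s₀))) :
    ∀ᶠ n in atTop, (Quotient.out (1 : ParamGermHomeoPlus S s₀)).F (q n) = q n := by
  have he : gmk (ParamLocalHomeo.one) = (1 : ParamGermHomeoPlus S s₀) := rfl
  filter_upwards [hq.eventually (out_equiv he)] with n h
  exact h

private lemma ev_comp_mem (hq : Tendsto q atTop (nhds ((0:ℝ), s₀)))
    (a b : ParamGermHomeoPlus S s₀) :
    ∀ᶠ n in atTop, (Quotient.out b).F (q n) ∈ (Quotient.out a).U := by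
  exact (tendsto_F hq (Quotient.out b)).eventually_mem
    ((Quotient.out a).isOpen_U.mem_nhds (Quotient.out a).mem_U)

variable (𝒰 : Ultrafilter ℕ)

private def Eqv (q : ℕ → ℝ × S) (g : ParamGermHomeoPlus S s₀) : Prop :=
  ∀ᶠ n in (𝒰 : Filter ℕ), ((Quotient.out g).F (q n)).1 = (q n).1

private def Pos (q : ℕ → ℝ × S) (g : ParamGermHomeoPlus S s₀) : Prop :=
  ∀ᶠ n in (𝒰 : Filter ℕ), (q n).1 < ((Quotient.out g).F (q n)).1

variable {𝒰}

private lemma Eqv_mul (h𝒰 : (𝒰 : Filter ℕ) ≤ atTop)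
    (hq : Tendsto q atTop (nhds ((0:ℝ), s₀)))
    {a b : ParamGermHomeoPlus S s₀} (ha : Eqv 𝒰 q a) (hb : Eqv 𝒰 q b) :
    Eqv 𝒰 q (a * b) := by
  filter_upwards [ha, hb, ((ev_comp hq a b).filter_mono h𝒰),
    ((ev_facts hq (Quotient.out b)).filter_mono h𝒰)] with n ha' hb' hc hfb
  rw [hc]
  have h2 : (Quotient.out b).F (q n) = q n := Prod.ext hb' hfb.2.2
  rw [h2]
  exact ha'

private lemma Pos_mul_left (h𝒰 : (𝒰 : Filter ℕ) ≤ atTop)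
    (hq : Tendsto q atTop (nhds ((0:ℝ), s₀)))
    {a b : ParamGermHomeoPlus S s₀} (ha : Pos 𝒰 q a) (hb : Eqv 𝒰 q b) :
    Pos 𝒰 q (a * b) := by
  filter_upwards [ha, hb, ((ev_comp hq a b).filter_mono h𝒰),
    ((ev_facts hq (Quotient.out b)).filter_mono h𝒰)] with n ha' hb' hc hfb
  rw [hc]
  have h2 : (Quotient.out b).F (q n) = q n := Prod.ext hb' hfb.2.2
  rw [h2]
  exact ha'

private lemma Pos_mul_right (h𝒰 : (𝒰 : Filter ℕ) ≤ atTop)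
    (hq : Tendsto q atTop (nhds ((0:ℝ), s₀)))
    {a b : ParamGermHomeoPlus S s₀} (ha : Eqv 𝒰 q a) (hb : Pos 𝒰 q b) :
    Pos 𝒰 q (a * b) := by
  filter_upwards [ha, hb, ((ev_comp hq a b).filter_mono h𝒰),
    ((ev_facts hq (Quotient.out b)).filter_mono h𝒰),
    ((ev_facts hq (Quotient.out a)).filter_mono h𝒰),
    ((ev_comp_mem hq a b).filter_mono h𝒰)] with n ha' hb' hc hfb hfa hm
  rw [hc]
  have hlt := (Quotient.out a).mono (q n) hfa.1 ((Quotient.out b).F (q n)) hm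
    hfb.2.2.symm hb'
  calc (q n).1 = ((Quotient.out a).F (q n)).1 := ha'.symm
    _ < _ := hlt

private lemma Pos_mul_both (h𝒰 : (𝒰 : Filter ℕ) ≤ atTop)
    (hq : Tendsto q atTop (nhds ((0:ℝ), s₀)))
    {a b : ParamGermHomeoPlus S s₀} (ha : Pos 𝒰 q a) (hb : Pos 𝒰 q b) :
    Pos 𝒰 q (a * b) := by
  filter_upwards [ha, hb, ((ev_comp hq a b).filter_mono h𝒰),
    ((ev_facts hq (Quotient.out b)).filter_mono h𝒰),
    ((ev_facts hq (Quotient.out a)).filter_mono h𝒰),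
    ((ev_comp_mem hq a b).filter_mono h𝒰)] with n ha' hb' hc hfb hfa hm
  rw [hc]
  have hlt := (Quotient.out a).mono (q n) hfa.1 ((Quotient.out b).F (q n)) hm
    hfb.2.2.symm hb'
  exact lt_trans ha' hlt

private lemma Eqv_inv (h𝒰 : (𝒰 : Filter ℕ) ≤ atTop)
    (hq : Tendsto q atTop (nhds ((0:ℝ), s₀)))
    {a : ParamGermHomeoPlus S s₀} (ha : Eqv 𝒰 q a) : Eqv 𝒰 q a⁻¹ := by
  filter_upwards [ha, ((ev_inv hq a).filter_mono h𝒰),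
    ((ev_facts hq (Quotient.out a)).filter_mono h𝒰)] with n ha' hc hfa
  rw [hc]
  have hfix : (Quotient.out a).F (q n) = q n := Prod.ext ha' hfa.2.2
  rw [G_fix _ hfa.1 hfix]

private lemma Pos_inv_of_neg (h𝒰 : (𝒰 : Filter ℕ) ≤ atTop)
    (hq : Tendsto q atTop (nhds ((0:ℝ), s₀)))
    {a : ParamGermHomeoPlus S s₀}
    (ha : ∀ᶠ n in (𝒰 : Filter ℕ), ((Quotient.out a).F (q n)).1 < (q n).1) :
    Pos 𝒰 q a⁻¹ := by
  filter_upwards [ha, ((ev_inv hq a).filter_mono h𝒰),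
    ((ev_facts hq (Quotient.out a)).filter_mono h𝒰)] with n ha' hc hfa
  rw [hc]
  exact G_up _ hfa.1 hfa.2.1 ha'

private lemma Pos_one_false (h𝒰 : (𝒰 : Filter ℕ) ≤ atTop)
    (hq : Tendsto q atTop (nhds ((0:ℝ), s₀)))
    (h : Pos 𝒰 q (1 : ParamGermHomeoPlus S s₀)) : False := by
  have h1 := (ev_one hq).filter_mono h𝒰
  obtain ⟨n, hn, hn1⟩ := (h.and h1).exists
  rw [hn1] at hn
  exact lt_irrefl _ hn

end GermSignAux

/-- For a pointed metrizable space `(S, s₀)` and nonidentity germs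
`f₁, …, f_k` in `Homeo̰₊^{(S,s₀)}(ℝ, 0)`, there are signs `εᵢ ∈ {−1, 1}` such
that the subsemigroup generated by `f₁ ^ ε₁, …, f_k ^ ε_k` does not contain the
identity germ. -/
theorem exists_signs_semigroup_not_mem_one {S : Type*} [TopologicalSpace S]
    [TopologicalSpace.MetrizableSpace S] (s₀ : S) (k : ℕ)
    (f : Fin k → ParamGermHomeoPlus S s₀) (hf : ∀ i, f i ≠ 1) :
    ∃ ε : Fin k → ℤ, (∀ i, ε i = 1 ∨ ε i = -1) ∧
      (1 : ParamGermHomeoPlus S s₀) ∉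
        Subsemigroup.closure (Set.range fun i => f i ^ ε i) := by
  classical
  have hfreq : ∀ i : Fin k, ∃ᶠ x in nhds ((0:ℝ), s₀), (Quotient.out (f i)).F x ≠ x := by
    intro i
    by_contra h
    rw [Filter.not_frequently] at h
    apply hf i
    have h2 : GermSignAux.gmk (Quotient.out (f i)) =
        GermSignAux.gmk (ParamLocalHomeo.one (S := S) (s₀ := s₀)) := by
      apply Quotient.sound
      exact h.mono fun x hx => not_not.mp hx
    rw [GermSignAux.gmk_out] at h2
    exact h2
  have hseq : ∀ i : Fin k, ∃ w : ℕ → ℝ × S, Tendsto w atTop (nhds ((0:ℝ), s₀)) ∧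
      ∀ n, (Quotient.out (f i)).F (w n) ≠ w n := by
    intro i
    obtain ⟨w, h1, h2⟩ := Filter.exists_seq_forall_of_frequently (hfreq i)
    exact ⟨w, h1, h2⟩
  choose w hw hwm using hseq
  set 𝒰 : Ultrafilter ℕ := Filter.hyperfilter ℕ with h𝒰def
  have h𝒰 : (𝒰 : Filter ℕ) ≤ atTop := by
    rw [← Nat.cofinite_eq_atTop]; exact Filter.hyperfilter_le_cofinite
  have hgen : ∀ i : Fin k, ∃ ε : ℤ, (ε = 1 ∨ ε = -1) ∧
      (∃ j : Fin k, GermSignAux.Pos 𝒰 (w j) (f i ^ ε) ∧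
        ∀ j' : Fin k, j' < j → GermSignAux.Eqv 𝒰 (w j') (f i ^ ε)) := by
    intro i
    have hni : ¬ GermSignAux.Eqv 𝒰 (w i) (f i) := by
      intro hE
      have hfa := (GermSignAux.ev_facts (hw i) (Quotient.out (f i))).filter_mono h𝒰
      obtain ⟨n, h1, h2⟩ := ((hE : ∀ᶠ n in (𝒰 : Filter ℕ), _).and hfa).exists
      exact hwm i n (Prod.ext h1 h2.2.2)
    obtain ⟨j, hj, hjmin⟩ := (wellFounded_lt (α := Fin k)).has_min
      {j | ¬ GermSignAux.Eqv 𝒰 (w j) (f i)} ⟨i, hni⟩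
    have hEqlt : ∀ j' : Fin k, j' < j → GermSignAux.Eqv 𝒰 (w j') (f i) := by
      intro j' hj'
      by_contra hc
      exact hjmin j' hc hj'
    have hne : ∀ᶠ n in (𝒰 : Filter ℕ),
        ((Quotient.out (f i)).F (w j n)).1 ≠ (w j n).1 :=
      Ultrafilter.eventually_not.mpr hj
    have hsplit := Ultrafilter.eventually_or.mp (hne.mono fun n hn => lt_or_gt_of_ne hn)
    rcases hsplit with hneg | hpos
    · refine ⟨-1, Or.inr rfl, j, ?_, ?_⟩
      · rw [zpow_neg_one]
        exact GermSignAux.Pos_inv_of_neg h𝒰 (hw j) hneg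
      · intro j' hj'
        rw [zpow_neg_one]
        exact GermSignAux.Eqv_inv h𝒰 (hw j') (hEqlt j' hj')
    · refine ⟨1, Or.inl rfl, j, ?_, ?_⟩
      · rw [zpow_one]
        exact hpos
      · intro j' hj'
        rw [zpow_one]
        exact hEqlt j' hj'
  choose ε hε hstrict using hgen
  refine ⟨ε, hε, ?_⟩
  intro hmem
  have key : ∃ j : Fin k, GermSignAux.Pos 𝒰 (w j) (1 : ParamGermHomeoPlus S s₀) ∧
      ∀ j' : Fin k, j' < j → GermSignAux.Eqv 𝒰 (w j') (1 : ParamGermHomeoPlus S s₀) := by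
    refine Subsemigroup.closure_induction (p := fun x _ => ∃ j : Fin k,
      GermSignAux.Pos 𝒰 (w j) x ∧ ∀ j' : Fin k, j' < j → GermSignAux.Eqv 𝒰 (w j') x)
      ?_ ?_ hmem
    · rintro x ⟨i, rfl⟩
      exact hstrict i
    · rintro x y hx hy ⟨jx, hxp, hxe⟩ ⟨jy, hyp, hye⟩
      rcases lt_trichotomy jx jy with h | h | h
      · exact ⟨jx, GermSignAux.Pos_mul_left h𝒰 (hw jx) hxp (hye jx h),
          fun j' hj' => GermSignAux.Eqv_mul h𝒰 (hw j') (hxe j' hj') (hye j' (hj'.trans h))⟩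
      · subst h
        exact ⟨jx, GermSignAux.Pos_mul_both h𝒰 (hw jx) hxp hyp,
          fun j' hj' => GermSignAux.Eqv_mul h𝒰 (hw j') (hxe j' hj') (hye j' hj')⟩
      · exact ⟨jy, GermSignAux.Pos_mul_right h𝒰 (hw jy) (hxe jy h) hyp,
          fun j' hj' => GermSignAux.Eqv_mul h𝒰 (hw j') (hxe j' (hj'.trans h)) (hye j' hj')⟩
  obtain ⟨j, hp, -⟩ := key
  exact GermSignAux.Pos_one_false h𝒰 (hw j) hp
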